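/- arXiv:0806.1494 — 5 statements merged into one kernel-verified Lean document; each statement's English description precedes it below -/
import Mathlib

section
/- In the whole genome duplication - random loss model, the set of permutations obtainable from an identity permutation in at most p duplication-loss steps is stable for the pattern-involvement relation ≺: if σ of size n is obtainable from the identity of size n in at most p steps, and π of size k is a pattern of σ, then π is obtainable from the identity of size k in at most p steps. -/
/-- `π` is a pattern of `σ` (written `π ≺ σ`). -/
def IsPattern {k n : ℕ} (π : Equiv.Perm (Fin k)) (σ : Equiv.Perm (Fin n)) : Prop :=
  ∃ f : Fin k ↪o Fin n, ∀ ℓ m : Fin k, π ℓ < π m → σ (f ℓ) < σ (f m)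

/-- One step of the whole genome duplication - random loss model: `σ'` is obtained from
`σ` by choosing a set of positions (the first `m` positions after reordering by `τ`) and
writing the subsequence of `σ` at these positions, in increasing order of positions,
followed by the subsequence of `σ` at the remaining positions, in increasing order of
positions.  Here `τ` sends the new position of an element to its old position. -/
def DLStep {n : ℕ} (σ σ' : Equiv.Perm (Fin n)) : Prop :=
  ∃ (m : ℕ) (τ : Equiv.Perm (Fin n)),
    (∀ i j : Fin n, (i : ℕ) < m → (j : ℕ) < m → i < j → τ i < τ j) ∧
    (∀ i j : Fin n, m ≤ (i : ℕ) → m ≤ (j : ℕ) → i < j → τ i < τ j) ∧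
    ∀ i, σ' i = σ (τ i)

/-- `σ` is obtainable from the identity permutation in at most `p` duplication-loss steps. -/
def ObtainableIn {n : ℕ} (p : ℕ) (σ : Equiv.Perm (Fin n)) : Prop :=
  ∃ (q : ℕ) (c : ℕ → Equiv.Perm (Fin n)), q ≤ p ∧ c 0 = 1 ∧ c q = σ ∧
    ∀ i, i < q → DLStep (c i) (c (i + 1))

/-!
Restricting a duplication-loss step `σ → σ'` to a set of positions of `σ'` gives a
duplication-loss step between patterns: the chosen positions of `σ'` come from some set of
positions of `σ`, and the split of `σ'` into the kept copy and the lost copy induces a split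
of the smaller pattern. By induction along a chain of steps from the identity, every
pattern of a permutation obtainable in `q` steps is itself obtainable in `q` steps.
-/

open Function Finset

section Standardize

variable {k : ℕ} {α : Type*} [LinearOrder α]

/-- `standardize v ℓ` is the rank of `v ℓ` among the values of `v`. -/
def standardize (v : Fin k → α) : Equiv.Perm (Fin k) :=
  (Tuple.sort v).symm

lemma strictMono_comp_sort {v : Fin k → α} (hv : Injective v) : StrictMono (v ∘ Tuple.sort v) :=
  (Tuple.monotone_sort v).strictMono_of_injective (hv.comp (Tuple.sort v).injective)

lemma standardize_lt_standardize_iff {v : Fin k → α} (hv : Injective v) (ℓ m : Fin k) :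
    standardize v ℓ < standardize v m ↔ v ℓ < v m := by
  simpa [standardize] using
    ((strictMono_comp_sort hv).lt_iff_lt (a := (Tuple.sort v).symm ℓ)
      (b := (Tuple.sort v).symm m)).symm

lemma eq_standardize_of_strictMono {v : Fin k → α} {π : Equiv.Perm (Fin k)}
    (h : StrictMono (v ∘ π.symm)) : π = standardize v := by
  have hsort : π.symm = Tuple.sort v :=
    Tuple.eq_sort_iff.mpr ⟨h.monotone, fun _ _ hij heq => absurd (h.injective heq) hij.ne⟩
  rw [standardize, ← hsort, Equiv.symm_symm]

lemma standardize_eq_one {v : Fin k → α} (hv : StrictMono v) : standardize v = 1 :=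
  (eq_standardize_of_strictMono (v := v) (π := 1) hv).symm

lemma standardize_comp_perm {v : Fin k → α} (hv : Injective v) (e : Equiv.Perm (Fin k)) :
    standardize (v ∘ e) = e.trans (standardize v) := by
  refine (eq_standardize_of_strictMono ?_).symm
  convert strictMono_comp_sort hv using 1
  ext ℓ
  simp [standardize]

end Standardize

lemma IsPattern.exists_eq_standardize {k n : ℕ} {π : Equiv.Perm (Fin k)}
    {σ : Equiv.Perm (Fin n)} (h : IsPattern π σ) :
    ∃ f : Fin k ↪o Fin n, π = standardize (σ ∘ f) := by
  obtain ⟨f, hf⟩ := h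
  refine ⟨f, eq_standardize_of_strictMono fun a b hab => ?_⟩
  simpa using hf (π.symm a) (π.symm b) (by simpa using hab)

section Obtainable

variable {n : ℕ}

lemma ObtainableIn.mono {p p' : ℕ} {σ : Equiv.Perm (Fin n)} (h : ObtainableIn p σ)
    (hp : p ≤ p') : ObtainableIn p' σ := by
  obtain ⟨q, c, hq, h0, hcq, hs⟩ := h
  exact ⟨q, c, hq.trans hp, h0, hcq, hs⟩

lemma obtainableIn_zero_one : ObtainableIn 0 (1 : Equiv.Perm (Fin n)) :=
  ⟨0, fun _ => 1, le_rfl, rfl, rfl, fun _ hi => absurd hi (Nat.not_lt_zero _)⟩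

lemma ObtainableIn.of_dlStep {q : ℕ} {σ σ' : Equiv.Perm (Fin n)} (h : ObtainableIn q σ)
    (hstep : DLStep σ σ') : ObtainableIn (q + 1) σ' := by
  classical
  obtain ⟨q₀, c, hq₀, h0, hcq, hs⟩ := h
  refine ⟨q₀ + 1, fun i => if i ≤ q₀ then c i else σ', by omega, by simp [h0], by simp, ?_⟩
  intro i hi
  rcases Nat.lt_or_ge i q₀ with hlt | hge
  · simpa [hlt.le, Nat.succ_le_of_lt hlt] using hs i hlt
  · obtain rfl : i = q₀ := by omega
    simpa [hcq] using hstep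

end Obtainable

/-- The witness `g'` enumerates in increasing order the positions `τ ∘ g` of `σ` from which
the entries of `σ'` at the positions `g` were copied. -/
lemma DLStep.exists_standardize {k n : ℕ} {σ σ' : Equiv.Perm (Fin n)} (hstep : DLStep σ σ')
    (g : Fin k ↪o Fin n) :
    ∃ g' : Fin k ↪o Fin n, DLStep (standardize (σ ∘ g')) (standardize (σ' ∘ g)) := by
  classical
  obtain ⟨m, τ, hlow, hhigh, hσ'⟩ := hstep
  set v : Fin k → Fin n := τ ∘ g
  have hv : Injective v := τ.injective.comp g.injective
  set g' : Fin k ↪o Fin n := OrderEmbedding.ofStrictMono _ (strictMono_comp_sort hv)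
  have hσ'g : σ' ∘ g = (σ ∘ g') ∘ standardize v := by
    ext ℓ
    simp [g', v, standardize, hσ']
  have hsplit : ∀ ℓ : Fin k, ℓ < #{i | (g i : ℕ) < m} ↔ (g ℓ : ℕ) < m := fun ℓ =>
    Tuple.lt_card_lt_iff_apply_lt_of_monotone (f := fun i => (g i : ℕ))
      (fun _ _ h => g.monotone h)
  refine ⟨g', #{i | (g i : ℕ) < m}, standardize v, ?_, ?_, ?_⟩
  · intro i j hi hj hij
    rw [standardize_lt_standardize_iff hv]
    exact hlow _ _ ((hsplit i).mp hi) ((hsplit j).mp hj) (g.lt_iff_lt.mpr hij)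
  · intro i j hi hj hij
    rw [standardize_lt_standardize_iff hv]
    exact hhigh _ _ (not_lt.mp ((hsplit i).not.mp hi.not_gt))
      (not_lt.mp ((hsplit j).not.mp hj.not_gt)) (g.lt_iff_lt.mpr hij)
  · intro ℓ
    rw [hσ'g, standardize_comp_perm (σ.injective.comp g'.injective)]
    rfl

lemma ObtainableIn.standardize_comp {k n p : ℕ} {σ : Equiv.Perm (Fin n)}
    (h : ObtainableIn p σ) (g : Fin k ↪o Fin n) : ObtainableIn p (standardize (σ ∘ g)) := by
  obtain ⟨q, c, hq, h0, rfl, hs⟩ := h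
  suffices ∀ i ≤ q, ∀ g : Fin k ↪o Fin n, ObtainableIn i (standardize (c i ∘ g)) from
    (this q le_rfl g).mono hq
  intro i
  induction i with
  | zero =>
    intro _ g
    rw [h0, Equiv.Perm.coe_one, id_comp, standardize_eq_one g.strictMono]
    exact obtainableIn_zero_one
  | succ i ih =>
    intro hi g
    obtain ⟨g', hg'⟩ := (hs i hi).exists_standardize g
    exact (ih (Nat.le_of_succ_le hi) g').of_dlStep hg'

/-- The class of permutations obtainable in at most `p` steps in the whole genome
duplication - random loss model is stable for the pattern-involvement relation. -/
theorem obtainable_stable_for_pattern {n : ℕ} (p : ℕ) (σ : Equiv.Perm (Fin n))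
    (h : ObtainableIn p σ) {k : ℕ} (π : Equiv.Perm (Fin k)) (hπ : IsPattern π σ) :
    ObtainableIn p π := by
  obtain ⟨f, rfl⟩ := hπ.exists_eq_standardize
  exact h.standardize_comp f
end

section
/- Let σ be a permutation of size n. In the whole genome duplication - random loss model, the minimum number of duplication-loss steps needed to obtain σ from the identity permutation 1 2 ... n equals ⌈log₂(desc(σ) + 1)⌉, where desc(σ)+1 is the number of maximal increasing substrings of σ. -/
/-!
A permutation is a concatenation of `k` (possibly empty) increasing factors exactly when
`desc σ < k`. One step at most doubles the number of factors: the
factors of the new word are those of the old one restricted to each of the two kept blocks.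
Conversely, from `2k` factors one step back is obtained by merging factor `i` with factor
`k + i` (sorted) for every `i < k`. Hence `σ` is obtainable in `p` steps iff `desc σ < 2 ^ p`.
-/

/-- `σ` has a descent at (0-based) position `i`, i.e. `σ i > σ (i+1)`. -/
def IsDescentAt {n : ℕ} (σ : Equiv.Perm (Fin n)) (i : ℕ) : Prop :=
  ∃ h : i + 1 < n, σ ⟨i + 1, h⟩ < σ ⟨i, Nat.lt_of_succ_lt h⟩

/-- The number of descents of `σ`. -/
noncomputable def descNum {n : ℕ} (σ : Equiv.Perm (Fin n)) : ℕ :=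
  {i : ℕ | IsDescentAt σ i}.ncard

open Function

section

variable {n : ℕ}

/-- Factors may be empty; `c i` is the index of the factor containing position `i`. -/
def FactorsIntoIncreasing (σ : Equiv.Perm (Fin n)) (k : ℕ) : Prop :=
  ∃ c : Fin n → ℕ, Monotone c ∧ (∀ i, c i < k) ∧ ∀ i j, i < j → c i = c j → σ i < σ j

lemma isDescentAt_iff {σ : Equiv.Perm (Fin n)} {i : ℕ} (h : i + 1 < n) :
    IsDescentAt σ i ↔ σ ⟨i + 1, h⟩ < σ ⟨i, by omega⟩ :=
  ⟨fun ⟨_, hlt⟩ => hlt, fun hlt => ⟨h, hlt⟩⟩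

lemma finite_setOf_isDescentAt (σ : Equiv.Perm (Fin n)) : {i | IsDescentAt σ i}.Finite :=
  (Set.finite_Iio n).subset fun i ⟨h, _⟩ => by simp only [Set.mem_Iio]; omega

lemma apply_le_apply_of_forall_not_isDescentAt {σ : Equiv.Perm (Fin n)} {i j : Fin n}
    (hij : i ≤ j) (h : ∀ d, (i : ℕ) ≤ d → d < j → ¬ IsDescentAt σ d) : σ i ≤ σ j := by
  obtain ⟨j, hj⟩ := j
  replace hij : (i : ℕ) ≤ j := hij
  induction j, hij using Nat.le_induction with
  | base => rfl
  | succ j hij ih =>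
    refine (ih (by omega) fun d hid hdj => h d hid (by simp only at hdj ⊢; omega)).trans ?_
    exact not_lt.1 fun hlt => h j hij (by simp) ((isDescentAt_iff hj).2 hlt)

lemma FactorsIntoIncreasing.descNum_lt {σ : Equiv.Perm (Fin n)} {k : ℕ}
    (hσ : FactorsIntoIncreasing σ k) (hk : 0 < k) : descNum σ < k := by
  obtain ⟨c, hmono, hlt, hinc⟩ := hσ
  have hstep : ∀ d (h : d + 1 < n), IsDescentAt σ d → c ⟨d, by omega⟩ < c ⟨d + 1, h⟩ :=
    fun d h hd => (hmono (Fin.mk_le_mk.2 d.le_succ)).lt_of_ne fun heq =>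
      (lt_asymm ((isDescentAt_iff h).1 hd)) (hinc _ _ (Fin.mk_lt_mk.2 d.lt_succ_self) heq)
  -- each descent `d` is sent to the index of the factor starting at `d + 1`
  let f : ℕ → ℕ := fun d => if h : d + 1 < n then c ⟨d + 1, h⟩ else 0
  have hf : ∀ d (h : d + 1 < n), f d = c ⟨d + 1, h⟩ := fun d h => dif_pos h
  have hmaps : ∀ d ∈ {d | IsDescentAt σ d}, f d ∈ (Finset.Ico 1 k : Set ℕ) := by
    rintro d ⟨h, hd⟩
    rw [Finset.coe_Ico, Set.mem_Ico, hf d h]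
    exact ⟨(Nat.zero_le _).trans_lt (hstep d h ⟨h, hd⟩), hlt _⟩
  have hstrict : StrictMonoOn f {d | IsDescentAt σ d} := by
    rintro d ⟨h, hd⟩ d' ⟨h', hd'⟩ hdd'
    rw [hf d h, hf d' h']
    exact (hmono (Fin.mk_le_mk.2 hdd')).trans_lt (hstep d' h' ⟨h', hd'⟩)
  have := Set.ncard_le_ncard_of_injOn f hmaps hstrict.injOn
  rw [Set.ncard_coe_finset, Nat.card_Ico] at this
  exact this.trans_lt (by omega)

lemma factorsIntoIncreasing_of_descNum_lt {σ : Equiv.Perm (Fin n)} {k : ℕ}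
    (hk : descNum σ < k) : FactorsIntoIncreasing σ k := by
  have hfin := finite_setOf_isDescentAt σ
  let c : Fin n → ℕ := fun i => {d | IsDescentAt σ d ∧ d < i}.ncard
  have hsub : ∀ {i j : Fin n}, i ≤ j →
      {d | IsDescentAt σ d ∧ d < i} ⊆ {d | IsDescentAt σ d ∧ d < j} :=
    fun hij _ ⟨hd, hdi⟩ => ⟨hd, hdi.trans_le hij⟩
  have hfin' : ∀ i : Fin n, {d | IsDescentAt σ d ∧ d < i}.Finite :=
    fun _ => hfin.subset fun _ hd => hd.1
  refine ⟨c, fun i j hij => Set.ncard_le_ncard (hsub hij) (hfin' j),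
    fun i => (Set.ncard_le_ncard (fun _ hd => hd.1) hfin).trans_lt hk, fun i j hij hc => ?_⟩
  have hno : ∀ d, (i : ℕ) ≤ d → d < j → ¬ IsDescentAt σ d := by
    intro d hid hdj hd
    refine (Set.ncard_lt_ncard ?_ (hfin' j)).ne hc
    exact (Set.ssubset_iff_of_subset (hsub hij.le)).2 ⟨d, ⟨hd, hdj⟩, fun h => (not_lt.2 hid) h.2⟩
  exact (apply_le_apply_of_forall_not_isDescentAt hij.le hno).lt_of_ne
    (σ.injective.ne hij.ne)

lemma factorsIntoIncreasing_iff {σ : Equiv.Perm (Fin n)} {k : ℕ} (hk : 0 < k) :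
    FactorsIntoIncreasing σ k ↔ descNum σ < k :=
  ⟨fun h => h.descNum_lt hk, factorsIntoIncreasing_of_descNum_lt⟩

lemma factorsIntoIncreasing_one_iff {σ : Equiv.Perm (Fin n)} :
    FactorsIntoIncreasing σ 1 ↔ σ = 1 := by
  constructor
  · rintro ⟨c, -, hlt, hinc⟩
    have hσ : StrictMono σ := fun i j hij => hinc i j hij (by have := hlt i; have := hlt j; omega)
    exact Equiv.ext fun i => congrFun hσ.eq_id i
  · rintro rfl
    exact ⟨fun _ => 0, monotone_const, fun _ => one_pos, fun i j hij _ => hij⟩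

lemma dlStep_iff {π σ : Equiv.Perm (Fin n)} :
    DLStep π σ ↔ ∃ (m : ℕ) (τ : Equiv.Perm (Fin n)),
      (∀ i j : Fin n, i < j → ((i : ℕ) < m ↔ (j : ℕ) < m) → τ i < τ j) ∧ ∀ i, σ i = π (τ i) := by
  constructor
  · rintro ⟨m, τ, hlo, hhi, heq⟩
    refine ⟨m, τ, fun i j hij hm => ?_, heq⟩
    by_cases hi : (i : ℕ) < m
    · exact hlo i j hi (hm.1 hi) hij
    · exact hhi i j (not_lt.1 hi) (not_lt.1 (mt hm.2 hi)) hij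
  · rintro ⟨m, τ, hτ, heq⟩
    exact ⟨m, τ, fun i j hi hj hij => hτ i j hij (iff_of_true hi hj),
      fun i j hi hj hij => hτ i j hij (iff_of_false (by omega) (by omega)), heq⟩

lemma DLStep.refl (σ : Equiv.Perm (Fin n)) : DLStep σ σ :=
  dlStep_iff.2 ⟨0, 1, fun _ _ hij _ => hij, fun _ => rfl⟩

lemma FactorsIntoIncreasing.of_dlStep {π σ : Equiv.Perm (Fin n)} {k : ℕ}
    (hπ : FactorsIntoIncreasing π k) (hst : DLStep π σ) : FactorsIntoIncreasing σ (2 * k) := by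
  obtain ⟨c, hmono, hlt, hinc⟩ := hπ
  obtain ⟨m, τ, hτ, heq⟩ := dlStep_iff.1 hst
  let c' : Fin n → ℕ := fun i => c (τ i) + if (i : ℕ) < m then 0 else k
  have hblock : ∀ i j : Fin n, c' i = c' j → ((i : ℕ) < m ↔ (j : ℕ) < m) := by
    intro i j h
    have := hlt (τ i); have := hlt (τ j)
    simp only [c'] at h
    split_ifs at h <;> omega
  refine ⟨c', fun i j hij => ?_, fun i => ?_, fun i j hij hc => ?_⟩
  · rcases hij.eq_or_lt with rfl | hij
    · rfl
    by_cases hm : ((i : ℕ) < m ↔ (j : ℕ) < m)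
    · have := hmono (hτ i j hij hm).le
      simp only [c']
      split_ifs <;> omega
    · have := hlt (τ i)
      simp only [c']
      split_ifs <;> simp only [Fin.lt_def] at hij <;> omega
  · have := hlt (τ i)
    simp only [c']
    split_ifs <;> omega
  · have hm := hblock i j hc
    have hc : c (τ i) = c (τ j) := by simp only [c', hm] at hc; omega
    rw [heq, heq]
    exact hinc _ _ (hτ i j hij hm) hc

lemma exists_perm_strictMono_comp {α : Type*} [LinearOrder α] {f : Fin n → α}
    (hf : Injective f) : ∃ ρ : Equiv.Perm (Fin n), StrictMono (f ∘ ρ) :=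
  ⟨Tuple.sort f, (Tuple.monotone_sort f).strictMono_of_injective
    (hf.comp (Tuple.sort f).injective)⟩

lemma exists_lt_iff_of_antitone {P : Fin n → Prop} (hP : Antitone P) :
    ∃ m : ℕ, ∀ i : Fin n, P i ↔ (i : ℕ) < m := by
  classical
  refine ⟨(Finset.univ.filter P).card, fun i => ⟨fun hi => ?_, fun hi => ?_⟩⟩
  · have : Finset.Iic i ⊆ Finset.univ.filter P := fun j hj =>
      Finset.mem_filter.2 ⟨Finset.mem_univ j, hP (Finset.mem_Iic.1 hj) hi⟩
    have := Finset.card_le_card this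
    rw [Fin.card_Iic] at this
    omega
  · by_contra hPi
    have : Finset.univ.filter P ⊆ Finset.Iio i := fun j hj =>
      Finset.mem_Iio.2 (lt_of_not_ge fun hij => hPi (hP hij (Finset.mem_filter.1 hj).2))
    have := Finset.card_le_card this
    rw [Fin.card_Iio] at this
    omega

lemma FactorsIntoIncreasing.exists_dlStep {σ : Equiv.Perm (Fin n)} {k : ℕ}
    (hσ : FactorsIntoIncreasing σ (2 * k)) :
    ∃ π, FactorsIntoIncreasing π k ∧ DLStep π σ := by
  obtain ⟨c, hmono, hlt, hinc⟩ := hσ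
  obtain ⟨m, hm⟩ := exists_lt_iff_of_antitone (P := fun i => c i < k)
    fun _ _ hij hj => (hmono hij).trans_lt hj
  -- factors `i` and `k + i` of `σ` both become factor `i` of `π`
  let g : Fin n → ℕ := fun i => if c i < k then c i else c i - k
  let key : Fin n → ℕ ×ₗ Fin n := fun i => toLex (g i, σ i)
  have hkey : ∀ i j, i < j → (c i < k ↔ c j < k) → key i < key j := by
    intro i j hij hblock
    rw [Prod.Lex.toLex_lt_toLex]
    rcases (hmono hij.le).lt_or_eq with hc | hc
    · left
      simp only [g]
      split_ifs <;> omega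
    · exact Or.inr ⟨by simp only [g, hc], hinc i j hij hc⟩
  obtain ⟨ρ, hρ⟩ := exists_perm_strictMono_comp (f := key)
    fun i j h => σ.injective (congrArg (fun x => (ofLex x).2) h)
  refine ⟨σ * ρ, ⟨g ∘ ρ, fun r s hrs => ?_, fun r => ?_, fun r s hrs hg => ?_⟩, ?_⟩
  · have := hρ.monotone hrs
    simp only [comp_apply, key, Prod.Lex.toLex_le_toLex] at this
    rcases this with h | ⟨h, -⟩ <;> simp only [comp_apply] <;> omega
  · have := hlt (ρ r)
    simp only [comp_apply, g]
    split_ifs <;> omega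
  · have := hρ hrs
    simp only [comp_apply, key, Prod.Lex.toLex_lt_toLex] at this hg
    rcases this with h | ⟨-, h⟩
    · omega
    · exact h
  · refine dlStep_iff.2 ⟨m, ρ.symm, fun i j hij hblock => ?_, fun i => by simp⟩
    rw [← hρ.lt_iff_lt]
    simpa using hkey i j hij ((hm i).trans (hblock.trans (hm j).symm))

lemma obtainableIn_zero_iff {σ : Equiv.Perm (Fin n)} : ObtainableIn 0 σ ↔ σ = 1 := by
  constructor
  · rintro ⟨q, c, hq, h0, hσ, -⟩
    obtain rfl : q = 0 := by omega
    exact hσ.symm.trans h0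
  · rintro rfl
    exact ⟨0, fun _ => 1, le_rfl, rfl, rfl, fun _ h => absurd h (Nat.not_lt_zero _)⟩

lemma obtainableIn_succ_iff {p : ℕ} {σ : Equiv.Perm (Fin n)} :
    ObtainableIn (p + 1) σ ↔ ∃ π, ObtainableIn p π ∧ DLStep π σ := by
  constructor
  · rintro ⟨q, c, hq, h0, hσ, hstep⟩
    cases q with
    | zero =>
      refine ⟨1, ?_, hσ ▸ h0 ▸ DLStep.refl _⟩
      exact ⟨0, fun _ => 1, Nat.zero_le _, rfl, rfl, fun _ h => absurd h (Nat.not_lt_zero _)⟩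
    | succ q =>
      exact ⟨c q, ⟨q, c, by omega, h0, rfl, fun i hi => hstep i (by omega)⟩,
        hσ ▸ hstep q q.lt_succ_self⟩
  · rintro ⟨π, ⟨q, c, hq, h0, hπ, hstep⟩, hst⟩
    refine ⟨q + 1, update c (q + 1) σ, by omega, by simp [h0], by simp, fun i hi => ?_⟩
    rcases (Nat.lt_succ_iff.1 hi).lt_or_eq with hi | rfl
    · rw [update_of_ne (by omega), update_of_ne (by omega)]
      exact hstep i hi
    · rw [update_self, update_of_ne (by omega), hπ]
      exact hst

lemma obtainableIn_iff_factorsIntoIncreasing {p : ℕ} {σ : Equiv.Perm (Fin n)} :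
    ObtainableIn p σ ↔ FactorsIntoIncreasing σ (2 ^ p) := by
  induction p generalizing σ with
  | zero => rw [obtainableIn_zero_iff, pow_zero, factorsIntoIncreasing_one_iff]
  | succ p ih =>
    simp only [obtainableIn_succ_iff, ih, pow_succ']
    exact ⟨fun ⟨_, hπ, hst⟩ => hπ.of_dlStep hst, FactorsIntoIncreasing.exists_dlStep⟩

end

/-- In the whole genome duplication - random loss model, the minimum number of steps
needed to obtain `σ` from the identity is `⌈log₂ (desc σ + 1)⌉`, where `desc σ + 1` is
the number of maximal increasing substrings of `σ`. -/
theorem min_steps_eq_clog {n : ℕ} (σ : Equiv.Perm (Fin n)) :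
    IsLeast {p : ℕ | ObtainableIn p σ} (Nat.clog 2 (descNum σ + 1)) := by
  have h : {p : ℕ | ObtainableIn p σ} = Set.Ici (Nat.clog 2 (descNum σ + 1)) := by
    ext p
    rw [Set.mem_ofPred_eq, obtainableIn_iff_factorsIntoIncreasing,
      factorsIntoIncreasing_iff (by positivity), Set.mem_Ici,
      Nat.clog_le_iff_le_pow one_lt_two, Nat.add_one_le_iff]
  exact h ▸ isLeast_Ici
end

section
/- Let σ be a minimal permutation with d descents, of size n. Then every ascent of σ is immediately preceded and immediately followed by a descent: if σ_i < σ_{i+1} for some 1 ≤ i ≤ n−1, then 2 ≤ i ≤ n−2, σ_{i−1} > σ_i, and σ_{i+1} > σ_{i+2}. -/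
/-- `σ` is a minimal permutation with `d` descents: it has `d` descents and every
pattern `π ≺ σ` with `π ≠ σ` (equivalently, of strictly smaller size) has fewer
than `d` descents. -/
def MinimalWithDescents (d : ℕ) {n : ℕ} (σ : Equiv.Perm (Fin n)) : Prop :=
  descNum σ = d ∧
    ∀ (k : ℕ) (π : Equiv.Perm (Fin k)), k < n → IsPattern π σ → descNum π < d

section Aux

variable {k n : ℕ}

private lemma patInj (σ : Equiv.Perm (Fin n)) (f : Fin k ↪o Fin n) :
    Function.Injective (fun m => σ (f m)) :=
  fun a b hab => f.injective (σ.injective hab)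

private lemma patS_card (σ : Equiv.Perm (Fin n)) (f : Fin k ↪o Fin n) :
    (Finset.image (fun m => σ (f m)) Finset.univ).card = k := by
  rw [Finset.card_image_of_injective _ (patInj σ f), Finset.card_univ, Fintype.card_fin]

noncomputable def patternPerm (σ : Equiv.Perm (Fin n)) (f : Fin k ↪o Fin n) :
    Equiv.Perm (Fin k) :=
  Equiv.ofBijective
    (fun ℓ => ((Finset.image (fun m => σ (f m)) Finset.univ).orderIsoOfFin
        (patS_card σ f)).symm
      ⟨σ (f ℓ), Finset.mem_image_of_mem _ (Finset.mem_univ ℓ)⟩)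
    (Finite.injective_iff_bijective.mp (fun a b hab => by
      have h1 := congrArg (((Finset.image (fun m => σ (f m)) Finset.univ).orderIsoOfFin
        (patS_card σ f))) hab
      simp only [OrderIso.apply_symm_apply, Subtype.mk.injEq] at h1
      exact f.injective (σ.injective h1)))

lemma patternPerm_lt_iff (σ : Equiv.Perm (Fin n)) (f : Fin k ↪o Fin n) (ℓ m : Fin k) :
    patternPerm σ f ℓ < patternPerm σ f m ↔ σ (f ℓ) < σ (f m) := by
  simp only [patternPerm, Equiv.ofBijective_apply]
  rw [OrderIso.lt_iff_lt, Subtype.mk_lt_mk]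

lemma isPattern_patternPerm (σ : Equiv.Perm (Fin n)) (f : Fin k ↪o Fin n) :
    IsPattern (patternPerm σ f) σ :=
  ⟨f, fun ℓ m h => (patternPerm_lt_iff σ f ℓ m).mp h⟩

end Aux

/-- The deletion embedding: skip position `p`. -/
def delEmb {n : ℕ} (p : ℕ) (hp : p < n) : Fin (n - 1) ↪o Fin n :=
  OrderEmbedding.ofStrictMono
    (fun m => if h : m.val < p then ⟨m.val, by omega⟩ else ⟨m.val + 1, by omega⟩)
    (by
      intro a b hab
      have hab' : a.val < b.val := hab
      dsimp only
      split <;> split <;> (simp only [Fin.mk_lt_mk]) <;> omega)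

lemma delEmb_val {n : ℕ} (p : ℕ) (hp : p < n) (m : Fin (n - 1)) :
    (delEmb p hp m).val = if m.val < p then m.val else m.val + 1 := by
  rcases Nat.lt_or_ge m.val p with h | h
  · simp [delEmb, OrderEmbedding.ofStrictMono, h]
  · simp [delEmb, OrderEmbedding.ofStrictMono, Nat.not_lt.mpr h]

lemma key_delete {n : ℕ} (σ : Equiv.Perm (Fin n)) (p : ℕ) (hp : p < n)
    (h1 : ¬ IsDescentAt σ p) (h2 : ∀ q, q + 1 = p → ¬ IsDescentAt σ q) :
    ∃ π : Equiv.Perm (Fin (n - 1)), IsPattern π σ ∧ descNum σ ≤ descNum π := by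
  set f := delEmb p hp
  refine ⟨patternPerm σ f, isPattern_patternPerm σ f, ?_⟩
  set π := patternPerm σ f with hπ
  set D : Set ℕ := {j | IsDescentAt σ j} with hD
  set D' : Set ℕ := {j | IsDescentAt π j} with hD'
  set ρ : ℕ → ℕ := fun j => if j < p then j else j - 1 with hρ
  -- every descent j of σ satisfies j + 1 < p or j > p
  have hcase : ∀ j ∈ D, j + 1 < p ∨ p < j := by
    intro j hj
    rcases Nat.lt_trichotomy j p with hjp | hjp | hjp
    · rcases Nat.lt_or_ge (j + 1) p with h | h
      · exact Or.inl h
      · exfalso; exact h2 j (by omega) hj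
    · exact absurd (hjp ▸ hj) h1
    · exact Or.inr hjp
  have hmapsto : ∀ j ∈ D, ρ j ∈ D' := by
    intro j hj
    obtain ⟨hjn, hdesc⟩ := hj
    have hfval : ∀ (m : Fin (n-1)), (f m).val = if m.val < p then m.val else m.val + 1 :=
      delEmb_val p hp
    rcases hcase j ⟨hjn, hdesc⟩ with hc | hc
    · have hρj : ρ j = j := by simp [hρ]; omega
      rw [hρj]
      refine ⟨by omega, ?_⟩
      rw [hπ, patternPerm_lt_iff]
      have e1 : f ⟨j + 1, by omega⟩ = ⟨j + 1, hjn⟩ := by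
        apply Fin.ext; rw [hfval]; simp; omega
      have e2 : f ⟨j, by omega⟩ = ⟨j, Nat.lt_of_succ_lt hjn⟩ := by
        apply Fin.ext; rw [hfval]; simp; omega
      rw [e1, e2]; exact hdesc
    · have hρj : ρ j = j - 1 := by simp [hρ]; omega
      rw [hρj]
      refine ⟨by omega, ?_⟩
      rw [hπ, patternPerm_lt_iff]
      have e1 : f ⟨j - 1 + 1, by omega⟩ = ⟨j + 1, hjn⟩ := by
        apply Fin.ext; rw [hfval]; simp only; split <;> omega
      have e2 : f ⟨j - 1, by omega⟩ = ⟨j, Nat.lt_of_succ_lt hjn⟩ := by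
        apply Fin.ext; rw [hfval]; simp only; split <;> omega
      rw [e1, e2]; exact hdesc
  have hinj : Set.InjOn ρ D := by
    intro a ha b hb hab
    rcases hcase a ha with h | h <;> rcases hcase b hb with h' | h' <;>
      simp only [hρ] at hab <;> (split at hab <;> split at hab) <;> omega
  have hD'fin : D'.Finite := by
    apply Set.Finite.subset (Set.finite_Iio n)
    intro j hj
    obtain ⟨hjn, _⟩ := hj
    exact Set.mem_Iio.mpr (by omega)
  calc descNum σ = D.ncard := rfl
    _ = (ρ '' D).ncard := (Set.ncard_image_of_injOn hinj).symm
    _ ≤ D'.ncard := Set.ncard_le_ncard (Set.image_subset_iff.mpr hmapsto) hD'fin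
    _ = descNum π := rfl

/-- In a minimal permutation with `d` descents, every ascent is immediately preceded and
immediately followed by a descent.  (Positions here are 0-based: an ascent at 0-based
position `i` corresponds to the paper's 1-based position `i + 1`, and the conclusion
`1 ≤ i` and `i + 2 < n` is the paper's `2 ≤ i ≤ n - 2` in 1-based indexing.) -/
theorem ascent_surrounded_by_descents {n d : ℕ} (σ : Equiv.Perm (Fin n))
    (h : MinimalWithDescents d σ) (i : ℕ) (hi : i + 1 < n)
    (hasc : σ ⟨i, Nat.lt_of_succ_lt hi⟩ < σ ⟨i + 1, hi⟩) :
    ∃ (h1 : 1 ≤ i) (h2 : i + 2 < n),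
      σ ⟨i, Nat.lt_of_succ_lt hi⟩ < σ ⟨i - 1, by omega⟩ ∧
      σ ⟨i + 2, h2⟩ < σ ⟨i + 1, hi⟩ := by
  obtain ⟨hd, hmin⟩ := h
  have key : ∀ p, p < n → ¬ IsDescentAt σ p → (∀ q, q + 1 = p → ¬ IsDescentAt σ q) → False := by
    intro p hp hnd hq
    obtain ⟨π, hpat, hle⟩ := key_delete σ p hp hnd hq
    have := hmin (n - 1) π (by omega) hpat
    omega
  have hnd_i : ¬ IsDescentAt σ i := by
    rintro ⟨h', hlt⟩
    exact absurd hasc (not_lt.mpr (le_of_lt hlt))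
  -- left descent
  have left : ∃ q, q + 1 = i ∧ IsDescentAt σ q := by
    by_contra hc
    push_neg at hc
    exact key i (by omega) hnd_i (fun q hq => hc q hq)
  -- right descent
  have right : IsDescentAt σ (i + 1) := by
    by_contra hc
    refine key (i + 1) hi hc ?_
    intro q hq
    have : q = i := by omega
    rw [this]; exact hnd_i
  obtain ⟨q, hq1, hqn, hqd⟩ := left
  obtain ⟨hrn, hrd⟩ := right
  refine ⟨by omega, by omega, ?_, hrd⟩
  have e1 : (⟨q + 1, hqn⟩ : Fin n) = ⟨i, Nat.lt_of_succ_lt hi⟩ := by apply Fin.ext; simp; omega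
  have e2 : (⟨q, Nat.lt_of_succ_lt hqn⟩ : Fin n) = ⟨i - 1, by omega⟩ := by
    apply Fin.ext; simp; omega
  rw [e1, e2] at hqd
  exact hqd
end

section
/- Let σ be a minimal permutation with d descents of size d+2, with unique ascent at position i, and suppose the four elements σ_{i−1} σ_i σ_{i+1} σ_{i+2} around the ascent form an occurrence of the pattern 3142 (so σ_{i−1} > σ_{i+2}). Then σ_{i−1} = σ_{i+2} + 1, i.e., there is no element of value strictly between σ_{i+2} and σ_{i−1}. -/
lemma dec_chain {n : ℕ} (σ : Equiv.Perm (Fin n)) (i : ℕ)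
    (key : ∀ j (h : j + 1 < n), j ≠ i → σ ⟨j + 1, h⟩ < σ ⟨j, Nat.lt_of_succ_lt h⟩) :
    ∀ b (hbn : b < n) a (han : a < n), a < b → (∀ k, a ≤ k → k < b → k ≠ i) →
      σ ⟨b, hbn⟩ < σ ⟨a, han⟩ := by
  intro b
  induction b with
  | zero => omega
  | succ m ih =>
    intro hbn a han hab hk
    have hm : m < n := by omega
    have hstep : σ ⟨m + 1, hbn⟩ < σ ⟨m, hm⟩ := key m hbn (hk m (by omega) (by omega))
    rcases Nat.lt_or_ge a m with hlt | hge
    · exact lt_trans hstep (ih hm a han hlt (fun k h1 h2 => hk k h1 (by omega)))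
    · have : a = m := by omega
      subst this
      exact hstep

set_option maxHeartbeats 1000000 in
/-- In a minimal permutation with `d` descents of size `d + 2` whose four elements
around the unique ascent (at 0-based position `i`) form an occurrence of the pattern
`3142`, the values `σ (i - 1)` and `σ (i + 2)` are consecutive:
`σ (i - 1) = σ (i + 2) + 1`. -/
theorem minimal_of_size_add_two_3142_consecutive (d : ℕ)
    (σ : Equiv.Perm (Fin (d + 2))) (h : MinimalWithDescents d σ)
    (i : ℕ) (h1 : 1 ≤ i) (h2 : i + 2 < d + 2)
    (ha : σ ⟨i, by omega⟩ < σ ⟨i - 1, by omega⟩)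
    (hb : σ ⟨i, by omega⟩ < σ ⟨i + 1, by omega⟩)
    (hc : σ ⟨i + 2, h2⟩ < σ ⟨i + 1, by omega⟩)
    (hd : σ ⟨i - 1, by omega⟩ < σ ⟨i + 1, by omega⟩)
    (he : σ ⟨i, by omega⟩ < σ ⟨i + 2, h2⟩)
    (hf : σ ⟨i + 2, h2⟩ < σ ⟨i - 1, by omega⟩) :
    (σ ⟨i - 1, by omega⟩ : ℕ) = (σ ⟨i + 2, h2⟩ : ℕ) + 1 := by
  classical
  obtain ⟨hdn, -⟩ := h
  -- the set of descent positions
  have hS : {j : ℕ | IsDescentAt σ j} = {j : ℕ | IsDescentAt σ j} := rfl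
  have hiS : i ∉ {j : ℕ | IsDescentAt σ j} := by
    rintro ⟨h', hlt⟩
    exact absurd hlt (not_lt.mpr (le_of_lt hb))
  have hsub : {j : ℕ | IsDescentAt σ j} ⊆ ↑((Finset.range (d + 1)).erase i) := by
    intro j hj
    obtain ⟨h', -⟩ := id hj
    simp only [Finset.coe_erase, Finset.coe_range, Set.mem_diff, Set.mem_Iio,
      Set.mem_singleton_iff]
    refine ⟨by omega, ?_⟩
    rintro rfl
    exact hiS hj
  have hcard : ((Finset.range (d + 1)).erase i).card = d := by
    rw [Finset.card_erase_of_mem (by simp; omega), Finset.card_range]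
    omega
  have hSeq : {j : ℕ | IsDescentAt σ j} = ↑((Finset.range (d + 1)).erase i) := by
    apply Set.eq_of_subset_of_ncard_le hsub
    · rw [Set.ncard_coe_finset, hcard]
      have : ({j : ℕ | IsDescentAt σ j} : Set ℕ).ncard = d := hdn
      omega
  have key : ∀ j (hj : j + 1 < d + 2), j ≠ i →
      σ ⟨j + 1, hj⟩ < σ ⟨j, Nat.lt_of_succ_lt hj⟩ := by
    intro j hj hji
    have : j ∈ ({j : ℕ | IsDescentAt σ j} : Set ℕ) := by
      rw [hSeq]
      simp only [Finset.coe_erase, Finset.coe_range, Set.mem_diff, Set.mem_Iio,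
        Set.mem_singleton_iff]
      exact ⟨by omega, hji⟩
    obtain ⟨h', hlt⟩ := this
    exact hlt
  -- suppose not consecutive
  by_contra hne
  have hf' : (σ ⟨i + 2, h2⟩ : ℕ) < (σ ⟨i - 1, by omega⟩ : ℕ) := hf
  have hlt2 : (σ ⟨i + 2, h2⟩ : ℕ) + 2 ≤ (σ ⟨i - 1, by omega⟩ : ℕ) := by omega
  have hbd : (σ ⟨i - 1, by omega⟩ : Fin (d + 2)).val < d + 2 := (σ _).isLt
  obtain ⟨j, hjv⟩ : ∃ j : Fin (d + 2),
      σ j = ⟨(σ ⟨i + 2, h2⟩ : ℕ) + 1, by omega⟩ :=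
    ⟨σ.symm _, Equiv.apply_symm_apply σ _⟩
  have hjn : (j : ℕ) < d + 2 := j.isLt
  have hje : σ ⟨(j : ℕ), hjn⟩ = ⟨(σ ⟨i + 2, h2⟩ : ℕ) + 1, by omega⟩ := hjv
  have hjval : (σ ⟨(j : ℕ), hjn⟩ : ℕ) = (σ ⟨i + 2, h2⟩ : ℕ) + 1 :=
    congrArg Fin.val hje
  rcases Nat.lt_or_ge (j : ℕ) (i - 1) with hcase | hcase
  · -- j before i-1 : σ j > σ (i-1) > v, contradiction
    have h3 : (σ ⟨i - 1, by omega⟩ : ℕ) < (σ ⟨(j : ℕ), hjn⟩ : ℕ) :=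
      dec_chain σ i key (i - 1) (by omega) (j : ℕ) hjn hcase
        (fun k h1' h2' => by omega)
    omega
  rcases Nat.lt_or_ge (i + 2) (j : ℕ) with hcase2 | hcase2
  · -- j after i+2 : σ j < σ (i+2) < v
    have h3 : (σ ⟨(j : ℕ), hjn⟩ : ℕ) < (σ ⟨i + 2, h2⟩ : ℕ) :=
      dec_chain σ i key (j : ℕ) hjn (i + 2) h2 hcase2
        (fun k h1' h2' => by omega)
    omega
  -- now i - 1 ≤ j ≤ i + 2
  have hd' : (σ ⟨i - 1, by omega⟩ : ℕ) < (σ ⟨i + 1, by omega⟩ : ℕ) := hd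
  have he' : (σ ⟨i, by omega⟩ : ℕ) < (σ ⟨i + 2, h2⟩ : ℕ) := he
  have hquad : (j : ℕ) = i - 1 ∨ (j : ℕ) = i ∨ (j : ℕ) = i + 1 ∨ (j : ℕ) = i + 2 := by
    omega
  rcases hquad with hji | hji | hji | hji
  · -- j = i - 1
    have hq : σ ⟨i - 1, by omega⟩ = σ ⟨(j : ℕ), hjn⟩ :=
      congrArg σ (Fin.ext hji.symm)
    have := congrArg Fin.val hq
    omega
  · -- j = i
    have hq : σ ⟨i, by omega⟩ = σ ⟨(j : ℕ), hjn⟩ :=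
      congrArg σ (Fin.ext hji.symm)
    have := congrArg Fin.val hq
    omega
  · -- j = i + 1
    have hq : σ ⟨i + 1, by omega⟩ = σ ⟨(j : ℕ), hjn⟩ :=
      congrArg σ (Fin.ext hji.symm)
    have := congrArg Fin.val hq
    omega
  · -- j = i + 2
    have hq : σ ⟨i + 2, h2⟩ = σ ⟨(j : ℕ), hjn⟩ :=
      congrArg σ (Fin.ext hji.symm)
    have := congrArg Fin.val hq
    omega
end

section
/- For every d ≥ 2, the number of minimal permutations with d descents and of size d+2 is exactly twice the number of non-interval subsets of {1, 2, ..., d+1}. -/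
/-!
A permutation of size `d + 2` with `d` descents has a single ascent, so it lists some set `S` of
values in decreasing order, followed by the complement of `S` in decreasing order. It is minimal
iff deleting any one entry still leaves an ascent, i.e. iff no single value lies in every pair
`a < b` with `a ∈ S` and `b ∉ S`. Writing the values in increasing order as a 0/1-word (`1` for
the elements of `S`), this says that the word contains both `110` and `100` as subsequences, while
the non-interval sets are the words containing `101`. Both families are counted by adding a new
largest letter; the factor `2` comes from the fact that a `k`-element chain has `2 ^ k - k - 1`
subsets with at least two elements and equally many subsets that are not upper sets.
-/

open Finset Function Equiv

variable {n : ℕ}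

section Descents

instance (σ : Perm (Fin n)) : DecidablePred (IsDescentAt σ) :=
  fun _ => inferInstanceAs (Decidable (∃ _ : _, _))

def ascents (σ : Perm (Fin n)) : Finset ℕ := {i ∈ range (n - 1) | ¬ IsDescentAt σ i}

lemma mem_ascents {σ : Perm (Fin n)} {i : ℕ} :
    i ∈ ascents σ ↔ ∃ h : i + 1 < n, σ ⟨i, Nat.lt_of_succ_lt h⟩ < σ ⟨i + 1, h⟩ := by
  simp only [ascents, mem_filter, mem_range, IsDescentAt, not_exists, not_lt]
  constructor
  · rintro ⟨hi, hasc⟩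
    have h : i + 1 < n := by omega
    exact ⟨h, (hasc h).lt_of_ne (σ.injective.ne (by simp))⟩
  · rintro ⟨h, hlt⟩
    exact ⟨by omega, fun _ => hlt.le⟩

lemma descNum_add_card_ascents (σ : Perm (Fin n)) : descNum σ + #(ascents σ) = n - 1 := by
  have hdesc : {i : ℕ | IsDescentAt σ i} = ↑({i ∈ range (n - 1) | IsDescentAt σ i}) := by
    ext i
    simp only [Set.mem_ofPred_eq, coe_filter, mem_range]
    exact ⟨fun h => ⟨by obtain ⟨h, -⟩ := h; omega, h⟩, And.right⟩
  rw [descNum, hdesc, Set.ncard_coe_finset, ascents, card_filter_add_card_filter_not, card_range]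

lemma apply_lt_apply_of_isDescentAt {σ : Perm (Fin n)} {p q : Fin n} (hpq : p < q)
    (h : ∀ i : ℕ, p ≤ i → i < q → IsDescentAt σ i) : σ q < σ p := by
  suffices ∀ (m : ℕ) (hm : m < n), p < m → m ≤ q → σ ⟨m, hm⟩ < σ p from this q q.2 hpq le_rfl
  intro m
  induction m with
  | zero => intro _ hp; exact absurd hp (Nat.not_lt_zero _)
  | succ j ih =>
    intro hm hpj hjq
    obtain ⟨_, hdesc⟩ := h j (by omega) (by omega)
    rcases (Nat.le_of_lt_succ hpj).eq_or_lt with hpj' | hpj'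
    · simpa only [← hpj'] using hdesc
    · exact hdesc.trans (ih _ hpj' (by omega))

lemma strictAnti_of_ascents_eq_empty {σ : Perm (Fin n)} (h : ascents σ = ∅) : StrictAnti σ := by
  intro p q hpq
  refine apply_lt_apply_of_isDescentAt hpq fun i _ hiq => ?_
  by_contra hi
  have : i ∈ ascents σ := mem_filter.2 ⟨mem_range.2 (by omega), hi⟩
  simp [h] at this

lemma ascents_eq_empty_of_strictAnti {σ : Perm (Fin n)} (h : StrictAnti σ) : ascents σ = ∅ := by
  refine eq_empty_of_forall_notMem fun i hi => ?_
  obtain ⟨hi, hlt⟩ := mem_ascents.1 hi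
  exact (h (show (⟨i, _⟩ : Fin n) < ⟨i + 1, hi⟩ from Fin.mk_lt_mk.2 i.lt_succ_self)).asymm hlt

end Descents

section Patterns

lemma isPattern_revPerm_iff {m : ℕ} (σ : Perm (Fin (m + 1))) :
    IsPattern (Fin.revPerm : Perm (Fin m)) σ ↔ ∃ j : Fin (m + 1), StrictAnti (σ ∘ j.succAbove) := by
  constructor
  · rintro ⟨f, hf⟩
    obtain ⟨j, hj⟩ := card_eq_one.1 (show #(univ.map f.toEmbedding)ᶜ = 1 by simp [card_compl])
    have hrange : ∀ p, p ≠ j → ∃ a, f a = p := by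
      intro p hp
      by_contra h
      have : p ∈ (univ.map f.toEmbedding)ᶜ := by simpa using h
      exact hp (by simpa [hj] using this)
    refine ⟨j, fun a b hab => ?_⟩
    obtain ⟨a', ha'⟩ := hrange _ (Fin.succAbove_ne j a)
    obtain ⟨b', hb'⟩ := hrange _ (Fin.succAbove_ne j b)
    have hab' : a' < b' := by
      rw [← f.lt_iff_lt, ha', hb']
      exact Fin.strictMono_succAbove j hab
    simpa [ha', hb'] using hf b' a' (by simpa using hab')
  · rintro ⟨j, hj⟩
    exact ⟨j.succAboveOrderEmb, fun a b hab => hj (by simpa using hab)⟩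

lemma descNum_revPerm (k : ℕ) : descNum (Fin.revPerm : Perm (Fin k)) = k - 1 := by
  have := descNum_add_card_ascents (Fin.revPerm : Perm (Fin k))
  rwa [ascents_eq_empty_of_strictAnti Fin.rev_strictAnti, card_empty, add_zero] at this

lemma minimalWithDescents_iff {d : ℕ} (σ : Perm (Fin (d + 2))) :
    MinimalWithDescents d σ ↔
      descNum σ = d ∧ ∀ j : Fin (d + 2), ¬ StrictAnti (σ ∘ j.succAbove) := by
  refine ⟨fun ⟨hσ, hmin⟩ => ⟨hσ, fun j hj => ?_⟩, fun ⟨hσ, hj⟩ => ⟨hσ, fun k π hk hπ => ?_⟩⟩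
  · have := hmin (d + 1) Fin.revPerm (by omega) ((isPattern_revPerm_iff σ).2 ⟨j, hj⟩)
    rw [descNum_revPerm] at this
    omega
  · obtain rfl | hd := Nat.eq_zero_or_pos d
    · exact (hj 0 fun a b hab => absurd (Subsingleton.elim (α := Fin 1) a b) hab.ne).elim
    by_contra hge
    have hπ' := descNum_add_card_ascents π
    obtain rfl : k = d + 1 := by omega
    have hanti := strictAnti_of_ascents_eq_empty (card_eq_zero.1 (by omega : #(ascents π) = 0))
    obtain ⟨f, hf⟩ := hπ
    obtain ⟨j, hj'⟩ := (isPattern_revPerm_iff σ).1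
      ⟨f, fun a b hab => hf a b (hanti (by simpa using hab))⟩
    exact hj j hj'

end Patterns

section BlockSorted

def blockKey (S : Finset (Fin n)) (v : Fin n) : Bool ×ₗ (Fin n)ᵒᵈ :=
  toLex (decide (v ∉ S), OrderDual.toDual v)

lemma blockKey_injective (S : Finset (Fin n)) : Injective (blockKey S) := fun a b h => by
  simpa [blockKey] using congrArg (fun x => OrderDual.ofDual (ofLex x).2) h

lemma blockKey_lt_blockKey {S : Finset (Fin n)} {a b : Fin n} :
    blockKey S a < blockKey S b ↔ a ∈ S ∧ b ∉ S ∨ ((a ∈ S ↔ b ∈ S) ∧ b < a) := by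
  by_cases ha : a ∈ S <;> by_cases hb : b ∈ S <;>
    simp [blockKey, Prod.Lex.toLex_lt_toLex, ha, hb]

def IsBlockSorted (S : Finset (Fin n)) (σ : Perm (Fin n)) : Prop :=
  StrictMono (blockKey S ∘ σ)

/-- Lists `S` in decreasing order, followed by the complement of `S` in decreasing order. -/
def blockPerm (S : Finset (Fin n)) : Perm (Fin n) :=
  Tuple.sort (blockKey S)

lemma eq_blockPerm_iff {S : Finset (Fin n)} {σ : Perm (Fin n)} :
    σ = blockPerm S ↔ IsBlockSorted S σ := by
  rw [blockPerm, Tuple.eq_sort_iff]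
  refine ⟨fun h => h.1.strictMono_of_injective ((blockKey_injective S).comp σ.injective),
    fun h => ⟨h.monotone, fun i j hij heq => ?_⟩⟩
  exact absurd (σ.injective (blockKey_injective S heq)) hij.ne

lemma isBlockSorted_blockPerm (S : Finset (Fin n)) : IsBlockSorted S (blockPerm S) :=
  eq_blockPerm_iff.1 rfl

def initialValues (σ : Perm (Fin n)) (i : ℕ) : Finset (Fin n) := {v | (σ.symm v : ℕ) ≤ i}

@[simp]
lemma apply_mem_initialValues {σ : Perm (Fin n)} {i : ℕ} {p : Fin n} :
    σ p ∈ initialValues σ i ↔ (p : ℕ) ≤ i := by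
  simp [initialValues]

lemma isBlockSorted_initialValues {σ : Perm (Fin n)} {i : ℕ} (h : ascents σ ⊆ {i}) :
    IsBlockSorted (initialValues σ i) σ := by
  have hdesc : ∀ j, j + 1 < n → j ≠ i → IsDescentAt σ j := fun j hj hji => by
    by_contra hj'
    exact hji (mem_singleton.1 (h (mem_filter.2 ⟨mem_range.2 (by omega), hj'⟩)))
  intro p q hpq
  have hpq' : (p : ℕ) < q := hpq
  have hq := q.isLt
  simp only [comp_apply, blockKey_lt_blockKey, apply_mem_initialValues]
  by_cases hpi : (p : ℕ) ≤ i <;> by_cases hqi : (q : ℕ) ≤ i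
  · exact Or.inr ⟨iff_of_true hpi hqi,
      apply_lt_apply_of_isDescentAt hpq fun j _ hjq => hdesc j (by omega) (by omega)⟩
  · exact Or.inl ⟨hpi, hqi⟩
  · omega
  · exact Or.inr ⟨iff_of_false hpi hqi,
      apply_lt_apply_of_isDescentAt hpq fun j hpj _ => hdesc j (by omega) (by omega)⟩

namespace IsBlockSorted

variable {S : Finset (Fin n)} {σ : Perm (Fin n)}

lemma lt_iff (hσ : IsBlockSorted S σ) {p q : Fin n} (h : σ p < σ q) :
    p < q ↔ σ p ∈ S ∧ σ q ∉ S := by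
  rw [← hσ.lt_iff_lt, comp_apply, comp_apply, blockKey_lt_blockKey]
  simp [h.not_gt]

lemma mem_of_le (hσ : IsBlockSorted S σ) {p q : Fin n} (hpq : p ≤ q) (hq : σ q ∈ S) :
    σ p ∈ S := by
  rcases hpq.eq_or_lt with rfl | hpq
  · exact hq
  · have := hσ hpq
    rw [comp_apply, comp_apply, blockKey_lt_blockKey] at this
    tauto

lemma eq_initialValues (hσ : IsBlockSorted S σ) {i : ℕ} (hi : i ∈ ascents σ) :
    S = initialValues σ i := by
  obtain ⟨hin, hlt⟩ := mem_ascents.1 hi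
  obtain ⟨hiS, hiS'⟩ := (hσ.lt_iff hlt).1 (Fin.mk_lt_mk.2 (Nat.lt_succ_self i))
  ext v
  obtain ⟨p, rfl⟩ := σ.surjective v
  rw [apply_mem_initialValues]
  refine ⟨fun hp => ?_, fun hp => hσ.mem_of_le (Fin.mk_le_mk.2 hp) hiS⟩
  by_contra hpi
  exact hiS' (hσ.mem_of_le (show (⟨i + 1, hin⟩ : Fin n) ≤ p from Fin.mk_le_of_le_val (by omega)) hp)

lemma ascents_eq_singleton (hσ : IsBlockSorted S σ) {i : ℕ} (hi : i ∈ ascents σ) :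
    ascents σ = {i} := by
  refine eq_singleton_iff_unique_mem.2 ⟨hi, fun j hj => ?_⟩
  have hij : initialValues σ i = initialValues σ j := (hσ.eq_initialValues hi).symm.trans
    (hσ.eq_initialValues hj)
  have hi' := (mem_ascents.1 hi).1
  have hj' := (mem_ascents.1 hj).1
  have h1 : σ ⟨i, by omega⟩ ∈ initialValues σ j := hij ▸ apply_mem_initialValues.2 le_rfl
  have h2 : σ ⟨j, by omega⟩ ∈ initialValues σ i := hij ▸ apply_mem_initialValues.2 le_rfl
  simp only [apply_mem_initialValues] at h1 h2
  omega

lemma descNum_eq (hσ : IsBlockSorted S σ) (h : ¬ StrictAnti σ) : descNum σ = n - 2 := by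
  obtain ⟨i, hi⟩ := nonempty_iff_ne_empty.2 fun h' => h (strictAnti_of_ascents_eq_empty h')
  have := descNum_add_card_ascents σ
  rw [hσ.ascents_eq_singleton hi, card_singleton] at this
  omega

lemma not_strictAnti_comp_succAbove_iff {m : ℕ} {S : Finset (Fin (m + 1))} {σ : Perm (Fin (m + 1))}
    (hσ : IsBlockSorted S σ) (j : Fin (m + 1)) :
    ¬ StrictAnti (σ ∘ j.succAbove) ↔ ∃ a ∈ S, ∃ b ∉ S, a < b ∧ a ≠ σ j ∧ b ≠ σ j := by
  simp only [StrictAnti, comp_apply, not_forall, not_lt]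
  constructor
  · rintro ⟨p, q, hpq, hle⟩
    have hlt := hle.lt_of_ne (σ.injective.ne ((Fin.succAbove_right_injective).ne hpq.ne))
    obtain ⟨hp, hq⟩ := (hσ.lt_iff hlt).1 (Fin.strictMono_succAbove j hpq)
    exact ⟨_, hp, _, hq, hlt, σ.injective.ne (Fin.succAbove_ne j p),
      σ.injective.ne (Fin.succAbove_ne j q)⟩
  · rintro ⟨a, ha, b, hb, hab, haj, hbj⟩
    obtain ⟨p, hp⟩ := Fin.exists_succAbove_eq (σ.symm_apply_eq.not.2 haj)
    obtain ⟨q, hq⟩ := Fin.exists_succAbove_eq (σ.symm_apply_eq.not.2 hbj)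
    have hlt : σ.symm a < σ.symm b := (hσ.lt_iff (by simpa using hab)).2 (by simpa using ⟨ha, hb⟩)
    exact ⟨p, q, (Fin.strictMono_succAbove j).lt_iff_lt.1 (by rwa [hp, hq]),
      by simp [hp, hq, hab.le]⟩

end IsBlockSorted

end BlockSorted

section WordPatterns

variable {α : Type*} [LinearOrder α]

/- Read `U` in increasing order, writing `1` for the elements of `s` and `0` for the others;
`Has110 U s` says that this word contains `110` as a subsequence, and so on. -/

def Has10 (U s : Finset α) : Prop := ∃ a ∈ s, ∃ b ∈ U \ s, a < b

def Has110 (U s : Finset α) : Prop := ∃ a ∈ s, ∃ a' ∈ s, ∃ b ∈ U \ s, a < a' ∧ a' < b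

def Has100 (U s : Finset α) : Prop := ∃ a ∈ s, ∃ b ∈ U \ s, ∃ b' ∈ U \ s, a < b ∧ b < b'

def Has101 (U s : Finset α) : Prop := ∃ a ∈ s, ∃ b ∈ U \ s, ∃ c ∈ s, a < b ∧ b < c

instance (U s : Finset α) : Decidable (Has10 U s) := inferInstanceAs (Decidable (∃ _ ∈ _, _))
instance (U s : Finset α) : Decidable (Has110 U s) := inferInstanceAs (Decidable (∃ _ ∈ _, _))
instance (U s : Finset α) : Decidable (Has100 U s) := inferInstanceAs (Decidable (∃ _ ∈ _, _))
instance (U s : Finset α) : Decidable (Has101 U s) := inferInstanceAs (Decidable (∃ _ ∈ _, _))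

lemma forall_exists_pair_avoiding_iff {U s : Finset α} (hU : U.Nonempty) (hs : s ⊆ U) :
    (∀ v ∈ U, ∃ a ∈ s, ∃ b ∈ U \ s, a < b ∧ a ≠ v ∧ b ≠ v) ↔ Has110 U s ∧ Has100 U s := by
  constructor
  · intro h
    obtain ⟨a₀, ha₀, b₀, hb₀, hab₀, -⟩ := h _ hU.choose_spec
    refine ⟨?_, ?_⟩
    · obtain ⟨a, ha, b, hb, hab, ha₀', -⟩ := h a₀ (hs ha₀)
      rcases ha₀'.lt_or_gt with h' | h'
      · exact ⟨a, ha, a₀, ha₀, b₀, hb₀, h', hab₀⟩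
      · exact ⟨a₀, ha₀, a, ha, b, hb, h', hab⟩
    · obtain ⟨a, ha, b, hb, hab, -, hb₀'⟩ := h b₀ (sdiff_subset hb₀)
      rcases hb₀'.lt_or_gt with h' | h'
      · exact ⟨a, ha, b, hb, b₀, hb₀, hab, h'⟩
      · exact ⟨a₀, ha₀, b₀, hb₀, b, hb, hab₀, h'⟩
  · rintro ⟨⟨a, ha, a', ha', b, hb, haa', ha'b⟩, ⟨c, hc, e, he, e', he', hce, hee'⟩⟩ v -
    by_cases hva' : a' = v
    · subst hva'
      exact ⟨a, ha, b, hb, haa'.trans ha'b, haa'.ne, ha'b.ne'⟩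
    by_cases hvb : b = v
    · subst hvb
      have hcb : c ≠ b := fun h => (mem_sdiff.1 hb).2 (h ▸ hc)
      by_cases heb : e = b
      · exact ⟨c, hc, e', he', hce.trans hee', hcb, heb ▸ hee'.ne'⟩
      · exact ⟨c, hc, e, he, hce, hcb, heb⟩
    exact ⟨a', ha', b, hb, ha'b, hva', hvb⟩

end WordPatterns

lemma IsBlockSorted.minimalWithDescents_iff {d : ℕ} {S : Finset (Fin (d + 2))}
    {σ : Perm (Fin (d + 2))} (hσ : IsBlockSorted S σ) :
    MinimalWithDescents d σ ↔ Has110 univ S ∧ Has100 univ S := by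
  have hdel : (∀ j : Fin (d + 2), ¬ StrictAnti (σ ∘ j.succAbove)) ↔
      Has110 univ S ∧ Has100 univ S := by
    rw [← forall_exists_pair_avoiding_iff univ_nonempty (subset_univ S)]
    simp only [hσ.not_strictAnti_comp_succAbove_iff, mem_univ, true_imp_iff, mem_sdiff, true_and]
    exact σ.forall_congr_right (q := fun v => ∃ a ∈ S, ∃ b ∉ S, a < b ∧ a ≠ v ∧ b ≠ v)
  rw [_root_.minimalWithDescents_iff, ← hdel]
  refine ⟨And.right, fun h => ⟨?_, h⟩⟩
  exact hσ.descNum_eq fun hanti => h 0 (hanti.comp_strictMono (Fin.strictMono_succAbove 0))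

lemma exists_ascents_eq_singleton {d : ℕ} {σ : Perm (Fin (d + 2))} (h : descNum σ = d) :
    ∃ i, ascents σ = {i} :=
  card_eq_one.1 (by have := descNum_add_card_ascents σ; omega)

lemma ncard_minimalWithDescents (d : ℕ) :
    {σ : Perm (Fin (d + 2)) | MinimalWithDescents d σ}.ncard =
      #{S : Finset (Fin (d + 2)) | Has110 univ S ∧ Has100 univ S} := by
  have himage : {σ : Perm (Fin (d + 2)) | MinimalWithDescents d σ} =
      blockPerm '' ↑({S | Has110 univ S ∧ Has100 univ S} : Finset (Finset (Fin (d + 2)))) := by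
    ext σ
    refine ⟨fun hσ => ?_, ?_⟩
    · obtain ⟨i, hi⟩ := exists_ascents_eq_singleton hσ.1
      have hsorted := isBlockSorted_initialValues hi.subset
      exact ⟨_, by simpa using hsorted.minimalWithDescents_iff.1 hσ,
        (eq_blockPerm_iff.2 hsorted).symm⟩
    · rintro ⟨S, hS, rfl⟩
      exact (isBlockSorted_blockPerm S).minimalWithDescents_iff.2 (by simpa using hS)
  rw [himage, Set.InjOn.ncard_image, Set.ncard_coe_finset]
  intro S hS T _ hST
  have hmin := (isBlockSorted_blockPerm S).minimalWithDescents_iff.2 (by simpa using hS)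
  obtain ⟨i, hi⟩ := exists_ascents_eq_singleton hmin.1
  have hiS : i ∈ ascents (blockPerm S) := hi ▸ mem_singleton_self i
  calc S = initialValues (blockPerm S) i := (isBlockSorted_blockPerm S).eq_initialValues hiS
    _ = initialValues (blockPerm T) i := by rw [hST]
    _ = T := ((isBlockSorted_blockPerm T).eq_initialValues (hST ▸ hiS)).symm

section Counting

variable {α : Type*} [LinearOrder α] {V t : Finset α} {z : α}

lemma has110_insert_insert (hz : ∀ u ∈ V, u < z) :
    Has110 (insert z V) (insert z t) ↔ Has110 V t := by
  simp only [Has110, mem_sdiff, mem_insert]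
  grind

lemma has100_insert_insert (hz : ∀ u ∈ V, u < z) :
    Has100 (insert z V) (insert z t) ↔ Has100 V t := by
  simp only [Has100, mem_sdiff, mem_insert]
  grind

lemma has110_insert (hz : ∀ u ∈ V, u < z) (ht : t ⊆ V) :
    Has110 (insert z V) t ↔ 1 < #t := by
  simp only [Has110, mem_sdiff, mem_insert, one_lt_card]
  grind

lemma has100_insert (hz : ∀ u ∈ V, u < z) (ht : t ⊆ V) :
    Has100 (insert z V) t ↔ Has10 V t := by
  simp only [Has100, Has10, mem_sdiff, mem_insert]
  grind

lemma has101_insert (hz : ∀ u ∈ V, u < z) (ht : t ⊆ V) :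
    Has101 (insert z V) t ↔ Has101 V t := by
  simp only [Has101, mem_sdiff, mem_insert]
  grind

lemma has101_insert_insert (hz : ∀ u ∈ V, u < z) :
    Has101 (insert z V) (insert z t) ↔ Has10 V t := by
  simp only [Has101, Has10, mem_sdiff, mem_insert]
  refine ⟨by grind, fun ⟨a, ha, b, ⟨hbV, hbt⟩, hab⟩ => ?_⟩
  exact ⟨a, .inr ha, b, ⟨.inr hbV, by grind⟩, z, .inl rfl, hab, hz b hbV⟩

lemma has10_insert (hz : ∀ u ∈ V, u < z) (ht : t ⊆ V) :
    Has10 (insert z V) t ↔ t.Nonempty := by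
  simp only [Has10, mem_sdiff, mem_insert, Finset.Nonempty]
  grind

lemma has10_insert_insert (hz : ∀ u ∈ V, u < z) :
    Has10 (insert z V) (insert z t) ↔ Has10 V t := by
  simp only [Has10, mem_sdiff, mem_insert]
  grind

lemma card_filter_powerset_insert {β : Type*} [DecidableEq β] {U : Finset β} {a : β} (ha : a ∉ U)
    (p : Finset β → Prop) [DecidablePred p] :
    #{t ∈ (insert a U).powerset | p t} =
      #{t ∈ U.powerset | p t} + #{t ∈ U.powerset | p (insert a t)} := by
  simp only [card_filter]
  exact sum_powerset_insert ha _

lemma notMem_of_forall_lt (hz : ∀ u ∈ V, u < z) : z ∉ V := fun h => lt_irrefl z (hz z h)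

lemma card_filter_powerset_eq_empty (U : Finset α) : #{t ∈ U.powerset | t = ∅} = 1 := by
  rw [filter_eq', if_pos (empty_mem_powerset U), card_singleton]

lemma card_filter_not_has10 (U : Finset α) : #{t ∈ U.powerset | ¬ Has10 U t} = #U + 1 := by
  induction U using Finset.induction_on_max with
  | empty => simp [Has10]
  | insert z V hz ih =>
    have hempty : #{t ∈ V.powerset | ¬ Has10 (insert z V) t} = 1 := by
      refine (congrArg card (filter_congr fun t ht => ?_)).trans (card_filter_powerset_eq_empty V)
      rw [has10_insert hz (mem_powerset.1 ht), not_nonempty_iff_eq_empty]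
    have hrest : #{t ∈ V.powerset | ¬ Has10 (insert z V) (insert z t)} =
        #{t ∈ V.powerset | ¬ Has10 V t} :=
      congrArg card (filter_congr fun t _ => by rw [has10_insert_insert hz])
    rw [card_filter_powerset_insert (notMem_of_forall_lt hz), hempty, hrest, ih,
      card_insert_of_notMem (notMem_of_forall_lt hz)]
    ring

lemma card_filter_card_le_one (U : Finset α) : #{t ∈ U.powerset | #t ≤ 1} = #U + 1 := by
  induction U using Finset.induction_on_max with
  | empty => simp [filter_singleton]
  | insert z V hz ih =>
    have hempty : #{t ∈ V.powerset | #(insert z t) ≤ 1} = 1 := by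
      refine (congrArg card (filter_congr fun t ht => ?_)).trans (card_filter_powerset_eq_empty V)
      rw [card_insert_of_notMem fun h => notMem_of_forall_lt hz (mem_powerset.1 ht h),
        ← card_eq_zero]
      omega
    rw [card_filter_powerset_insert (notMem_of_forall_lt hz), hempty, ih,
      card_insert_of_notMem (notMem_of_forall_lt hz)]

lemma card_filter_one_lt_card_eq_card_filter_has10 (U : Finset α) :
    #{t ∈ U.powerset | 1 < #t} = #{t ∈ U.powerset | Has10 U t} := by
  have h1 := card_filter_add_card_filter_not (s := U.powerset) (fun t => Has10 U t)
  have h2 := card_filter_add_card_filter_not (s := U.powerset) (fun t => 1 < #t)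
  simp only [not_lt] at h2
  rw [card_filter_not_has10] at h1
  rw [card_filter_card_le_one] at h2
  omega

lemma card_has110_has100_insert (hz : ∀ u ∈ V, u < z) :
    #{t ∈ (insert z V).powerset | Has110 (insert z V) t ∧ Has100 (insert z V) t} =
      #{t ∈ V.powerset | 1 < #t ∧ Has10 V t} + #{t ∈ V.powerset | Has110 V t ∧ Has100 V t} := by
  rw [card_filter_powerset_insert (notMem_of_forall_lt hz)]
  congr 2 <;> refine filter_congr fun t ht => ?_
  · rw [has110_insert hz (mem_powerset.1 ht), has100_insert hz (mem_powerset.1 ht)]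
  · rw [has110_insert_insert hz, has100_insert_insert hz]

lemma card_has101_insert (hz : ∀ u ∈ V, u < z) :
    #{t ∈ (insert z V).powerset | Has101 (insert z V) t} =
      #{t ∈ V.powerset | Has101 V t} + #{t ∈ V.powerset | Has10 V t} := by
  rw [card_filter_powerset_insert (notMem_of_forall_lt hz)]
  congr 2 <;> refine filter_congr fun t ht => ?_
  · rw [has101_insert hz (mem_powerset.1 ht)]
  · rw [has101_insert_insert hz]

lemma card_filter_one_lt_card_has10_insert (hz : ∀ u ∈ V, u < z) :
    #{t ∈ (insert z V).powerset | 1 < #t ∧ Has10 (insert z V) t} =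
      2 * #{t ∈ V.powerset | Has10 V t} := by
  rw [card_filter_powerset_insert (notMem_of_forall_lt hz), two_mul]
  nth_rw 1 [← card_filter_one_lt_card_eq_card_filter_has10]
  congr 2 <;> refine filter_congr fun t ht => ?_
  · rw [has10_insert hz (mem_powerset.1 ht)]
    exact ⟨And.left, fun h => ⟨h, card_pos.1 (by omega)⟩⟩
  · rw [has10_insert_insert hz, card_insert_of_notMem
      fun h => notMem_of_forall_lt hz (mem_powerset.1 ht h)]
    refine ⟨And.right, fun h => ⟨?_, h⟩⟩
    obtain ⟨a, ha, -⟩ := h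
    have := card_pos.2 ⟨a, ha⟩
    omega

lemma card_has110_has100_insert_eq_two_mul (V : Finset α) (z : α) (hz : ∀ u ∈ V, u < z) :
    #{t ∈ (insert z V).powerset | Has110 (insert z V) t ∧ Has100 (insert z V) t} =
      2 * #{t ∈ V.powerset | Has101 V t} := by
  induction V using Finset.induction_on_max generalizing z with
  | empty => simp [Has110, Has101]
  | insert y W hy ih =>
    rw [card_has110_has100_insert hz, card_filter_one_lt_card_has10_insert hy,
      ih y hy, card_has101_insert hy]
    ring

end Counting

section Transfer

variable {α β : Type*} [LinearOrder α] [LinearOrder β]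

lemma has110_map (f : α ↪o β) (U s : Finset α) :
    Has110 (U.map f.toEmbedding) (s.map f.toEmbedding) ↔ Has110 U s := by
  simp [Has110, ← Finset.map_sdiff]

lemma has100_map (f : α ↪o β) (U s : Finset α) :
    Has100 (U.map f.toEmbedding) (s.map f.toEmbedding) ↔ Has100 U s := by
  simp [Has100, ← Finset.map_sdiff]

lemma card_has110_has100_map (f : α ↪o β) (U : Finset α) :
    #{t ∈ (U.map f.toEmbedding).powerset |
        Has110 (U.map f.toEmbedding) t ∧ Has100 (U.map f.toEmbedding) t} =
      #{t ∈ U.powerset | Has110 U t ∧ Has100 U t} := by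
  refine (card_nbij (·.map f.toEmbedding) (fun t ht => ?_) (map_injective _).injOn
    fun t ht => ?_).symm
  · simp only [coe_filter, mem_powerset, Set.mem_ofPred_eq] at ht ⊢
    rwa [map_subset_map, has110_map, has100_map]
  · simp only [coe_filter, mem_powerset, Set.mem_ofPred_eq] at ht
    obtain ⟨u, hu, rfl⟩ := subset_map_iff.1 ht.1
    rw [has110_map, has100_map] at ht
    exact ⟨u, by simpa [hu] using ht.2, rfl⟩

lemma card_has110_has100_fin (n : ℕ) :
    #{S : Finset (Fin n) | Has110 univ S ∧ Has100 univ S} =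
      #{t ∈ (Icc 1 n).powerset | Has110 (Icc 1 n) t ∧ Has100 (Icc 1 n) t} := by
  let e : Fin n ↪o ℕ := (Fin.succOrderEmb n).trans (Fin.valOrderEmb (n + 1))
  have he : univ.map e.toEmbedding = Icc 1 n := by
    ext x
    simp only [mem_map, mem_univ, true_and, mem_Icc]
    exact ⟨fun ⟨v, hv⟩ => by simp [← hv, e],
      fun hx => ⟨⟨x - 1, by omega⟩, by simp [e]; omega⟩⟩
  rw [← he, card_has110_has100_map, powerset_univ]

lemma has101_iff_of_subset_Icc [LocallyFiniteOrder α] {s : Finset α} {lo hi : α}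
    (hs : s ⊆ Icc lo hi) : Has101 (Icc lo hi) s ↔ s.Nonempty ∧ ¬ ∃ a b, s = Icc a b := by
  constructor
  · rintro ⟨a, ha, b, hb, c, hc, hab, hbc⟩
    refine ⟨⟨a, ha⟩, fun ⟨x, y, hxy⟩ => (mem_sdiff.1 hb).2 ?_⟩
    rw [hxy, mem_Icc] at ha hc ⊢
    exact ⟨ha.1.trans hab.le, hbc.le.trans hc.2⟩
  · rintro ⟨hne, hnot⟩
    by_contra h
    refine hnot ⟨s.min' hne, s.max' hne, ext fun x => ⟨fun hx => mem_Icc.2 ⟨min'_le s x hx,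
      le_max' s x hx⟩, fun hx => ?_⟩⟩
    by_contra hxs
    obtain ⟨hmin, hmax⟩ := mem_Icc.1 hx
    have hlo := (mem_Icc.1 (hs (min'_mem s hne))).1
    have hhi := (mem_Icc.1 (hs (max'_mem s hne))).2
    exact h ⟨_, min'_mem s hne, x, mem_sdiff.2 ⟨mem_Icc.2 ⟨hlo.trans hmin, hmax.trans hhi⟩, hxs⟩,
      _, max'_mem s hne, hmin.lt_of_ne fun h' => hxs (h' ▸ min'_mem s hne),
      hmax.lt_of_ne fun h' => hxs (h' ▸ max'_mem s hne)⟩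

end Transfer

theorem card_minimal_eq_twice_card_non_interval_general (d : ℕ) :
    {σ : Equiv.Perm (Fin (d + 2)) | MinimalWithDescents d σ}.ncard =
      2 * {s : Finset ℕ | s ⊆ Finset.Icc 1 (d + 1) ∧ s.Nonempty ∧
        ¬ ∃ a b : ℕ, s = Finset.Icc a b}.ncard := by
  have hnonInterval : {s : Finset ℕ | s ⊆ Icc 1 (d + 1) ∧ s.Nonempty ∧ ¬ ∃ a b, s = Icc a b} =
      ↑{t ∈ (Icc 1 (d + 1)).powerset | Has101 (Icc 1 (d + 1)) t} := by
    ext s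
    simp only [Set.mem_ofPred_eq, coe_filter, mem_powerset]
    exact and_congr_right fun hs => (has101_iff_of_subset_Icc hs).symm
  have hIcc : Icc 1 (d + 2) = insert (d + 2) (Icc 1 (d + 1)) := by
    ext x
    simp only [mem_Icc, mem_insert]
    omega
  rw [ncard_minimalWithDescents, card_has110_has100_fin, hnonInterval, Set.ncard_coe_finset, hIcc,
    card_has110_has100_insert_eq_two_mul _ _ fun u hu => by simp only [mem_Icc] at hu; omega]

/-- For `d ≥ 2`, the number of minimal permutations with `d` descents of size `d + 2`
is exactly twice the number of non-interval subsets of `{1, 2, …, d + 1}` (non-empty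
subsets that are not intervals of consecutive integers). -/
theorem card_minimal_eq_twice_card_non_interval (d : ℕ) (hd : 2 ≤ d) :
    {σ : Equiv.Perm (Fin (d + 2)) | MinimalWithDescents d σ}.ncard =
      2 * {s : Finset ℕ | s ⊆ Finset.Icc 1 (d + 1) ∧ s.Nonempty ∧
        ¬ ∃ a b : ℕ, s = Finset.Icc a b}.ncard :=
  card_minimal_eq_twice_card_non_interval_general d
end
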